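/- Let Ã : [a,b] → ℂ^{N×N} be continuous. Then U(t) := I + ∑_{n=1}^∞ (Θ ★ A^{★n})(t,a), where A(t,s) = Ã(t)Θ(t−s), converges and is the unique solution of U′(t) = Ã(t)U(t) with U(a) = I (i.e., the Θ ★ R^★(A) representation of the time-ordered exponential is valid). -/

import Mathlib

open MeasureTheory Set

/-- Heaviside function: `Θ x = 1` if `x ≥ 0`, else `0`. -/
noncomputable def Heaviside (x : ℝ) : ℝ := if 0 ≤ x then 1 else 0

/-- Operators on `ℂ^N`, formalizing `N × N` complex matrices. -/
abbrev MatN (N : ℕ) := (Fin N → ℂ) →L[ℂ] (Fin N → ℂ)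

/-- The matrix `★`-product of two matrix kernels on `[a,b]²`. -/
noncomputable def mStarProd {N : ℕ} (a b : ℝ) (G H : ℝ → ℝ → MatN N) : ℝ → ℝ → MatN N :=
  fun t s => ∫ τ in a..b, G t τ * H τ s

/-- `mStarPow a b A n` is the `(n+1)`-st `★`-power `A^{★(n+1)}`. -/
noncomputable def mStarPow {N : ℕ} (a b : ℝ) (A : ℝ → ℝ → MatN N) : ℕ → ℝ → ℝ → MatN N
  | 0 => A
  | n + 1 => mStarProd a b A (mStarPow a b A n)

/-- The Heaviside kernel times the identity matrix. -/
noncomputable def thetaI (N : ℕ) : ℝ → ℝ → MatN N := fun t s => Heaviside (t - s) • 1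

/-!
Writing `Q₀ = Ã` and `Qₙ₊₁(σ) = Ã(σ) ∫ₐ^σ Qₙ`, the `(n+1)`-st Dyson term `(Θ ★ A^{★(n+1)})(t,a)`
is the iterated integral `Pₙ(t) = ∫ₐᵗ Qₙ`, because the Heaviside factors cut every `★`-integral
over `[a,b]` down to `[a,σ]`. With `‖Ã‖ ≤ C` on `[a,b]` one gets `‖Pₙ(t)‖ ≤ (C(t-a))ⁿ⁺¹/(n+1)!`,
so the series converges uniformly, and since `∑ Qₙ = Ã (1 + ∑ Pₙ)` termwise, dominated
convergence gives the Volterra equation `U(t) = 1 + ∫ₐᵗ Ã U`. Differentiating it gives the ODE;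
uniqueness is Grönwall, as `X ↦ Ã(t) X` is `C`-Lipschitz.
-/

open scoped Nat

section Primitive

variable {F : Type*} [NormedAddCommGroup F] [NormedSpace ℝ F] {a b t : ℝ} {g : ℝ → F}

theorem continuousOn_primitive_of_continuousOn (hab : a ≤ b) (hg : ContinuousOn g (Icc a b)) :
    ContinuousOn (fun t => ∫ σ in a..t, g σ) (Icc a b) :=
  (intervalIntegral.continuousOn_primitive_interval' (hg.intervalIntegrable_of_Icc hab)
    left_mem_uIcc).mono Icc_subset_uIcc

theorem hasDerivWithinAt_primitive_of_continuousOn [CompleteSpace F]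
    (hg : ContinuousOn g (Icc a b)) (ht : t ∈ Icc a b) :
    HasDerivWithinAt (fun u => ∫ σ in a..u, g σ) (g t) (Icc a b) t := by
  have : Fact (t ∈ Icc a b) := ⟨ht⟩
  exact intervalIntegral.integral_hasDerivWithinAt_right
    ((hg.mono (Icc_subset_Icc_right ht.2)).intervalIntegrable_of_Icc ht.1)
    ⟨Icc a b, self_mem_nhdsWithin, hg.aestronglyMeasurable measurableSet_Icc⟩ (hg t ht)

theorem integral_mul_pow_div_factorial (C : ℝ) (n : ℕ) :
    ∫ σ in a..t, C * ((C * (σ - a)) ^ n / n !) = (C * (t - a)) ^ (n + 1) / (n + 1)! := by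
  have hderiv : ∀ σ, HasDerivAt (fun σ => (C * (σ - a)) ^ (n + 1) / (n + 1)!)
      (C * ((C * (σ - a)) ^ n / n !)) σ := fun σ => by
    refine ((((hasDerivAt_id' σ).sub_const a).const_mul C).pow (n + 1)).div_const
      ((n + 1)! : ℝ) |>.congr_deriv ?_
    rw [Nat.factorial_succ]
    push_cast
    field_simp
  rw [intervalIntegral.integral_eq_sub_of_hasDerivAt (fun σ _ => hderiv σ)
    (Continuous.intervalIntegrable (by fun_prop) _ _)]
  simp

theorem norm_integral_le_pow_div_factorial {C : ℝ} {n : ℕ} (hat : a ≤ t)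
    (hg : ∀ σ ∈ Ioc a t, ‖g σ‖ ≤ C * ((C * (σ - a)) ^ n / n !)) :
    ‖∫ σ in a..t, g σ‖ ≤ (C * (t - a)) ^ (n + 1) / (n + 1)! :=
  calc ‖∫ σ in a..t, g σ‖ ≤ ∫ σ in a..t, C * ((C * (σ - a)) ^ n / n !) :=
        intervalIntegral.norm_integral_le_of_norm_le hat (ae_of_all _ hg)
          (Continuous.intervalIntegrable (by fun_prop) _ _)
    _ = (C * (t - a)) ^ (n + 1) / (n + 1)! := integral_mul_pow_div_factorial C n

theorem summable_pow_succ_div_factorial (x : ℝ) :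
    Summable fun n => x ^ (n + 1) / (n + 1)! :=
  (summable_nat_add_iff 1).2 (Real.summable_pow_div_factorial x)

end Primitive

section LinearODE

variable {E : Type*} [NormedRing E] [NormedAlgebra ℝ E] {a b t τ C : ℝ} {At : ℝ → E}

theorem eqOn_of_hasDerivWithinAt_mul_left (hcont : ContinuousOn At (Icc a b)) {V W : ℝ → E}
    (hV : ∀ t ∈ Icc a b, HasDerivWithinAt V (At t * V t) (Icc a b) t)
    (hW : ∀ t ∈ Icc a b, HasDerivWithinAt W (At t * W t) (Icc a b) t) (ha : V a = W a) :
    EqOn V W (Icc a b) := by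
  obtain ⟨C, hC⟩ := isCompact_Icc.exists_bound_of_continuousOn hcont
  have hlip : ∀ t ∈ Ico a b, LipschitzOnWith C.toNNReal (At t * ·) univ := fun t ht =>
    ((lipschitzWith_smul (At t)).weaken (by
      rw [← NNReal.coe_le_coe, coe_nnnorm, Real.coe_toNNReal']
      exact (hC t (Ico_subset_Icc_self ht)).trans (le_max_left _ _))).lipschitzOnWith
  have hright : ∀ X : ℝ → E, (∀ t ∈ Icc a b, HasDerivWithinAt X (At t * X t) (Icc a b) t) →
      ∀ t ∈ Ico a b, HasDerivWithinAt X (At t * X t) (Ici t) t := fun X hX t ht =>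
    (hX t (Ico_subset_Icc_self ht)).mono_of_mem_nhdsWithin (Icc_mem_nhdsGE_of_mem ht)
  exact ODE_solution_unique_of_mem_Icc_right hlip
    (fun t ht => (hV t ht).continuousWithinAt) (hright V hV) (fun _ _ => mem_univ _)
    (fun t ht => (hW t ht).continuousWithinAt) (hright W hW) (fun _ _ => mem_univ _) ha

/-- `∫ₐᵗ picardTerm a At n` is the `n+1`-fold time-ordered integral
`∫_{a ≤ σₙ ≤ ⋯ ≤ σ₀ ≤ t} Ã(σ₀) ⋯ Ã(σₙ)`. -/
noncomputable def picardTerm (a : ℝ) (At : ℝ → E) : ℕ → ℝ → E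
  | 0 => At
  | n + 1 => fun σ => At σ * ∫ u in a..σ, picardTerm a At n u

theorem continuousOn_picardTerm (hab : a ≤ b) (hcont : ContinuousOn At (Icc a b)) :
    ∀ n, ContinuousOn (picardTerm a At n) (Icc a b)
  | 0 => hcont
  | n + 1 =>
    hcont.mul (continuousOn_primitive_of_continuousOn hab (continuousOn_picardTerm hab hcont n))

theorem norm_picardTerm_le (hC : ∀ t ∈ Icc a b, ‖At t‖ ≤ C) :
    ∀ n, ∀ τ ∈ Icc a b, ‖picardTerm a At n τ‖ ≤ C * ((C * (τ - a)) ^ n / n !)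
  | 0, τ, hτ => by simpa [picardTerm] using hC τ hτ
  | n + 1, τ, hτ =>
    calc ‖At τ * ∫ u in a..τ, picardTerm a At n u‖
        ≤ ‖At τ‖ * ‖∫ u in a..τ, picardTerm a At n u‖ := norm_mul_le _ _
      _ ≤ C * ((C * (τ - a)) ^ (n + 1) / (n + 1)!) :=
        mul_le_mul (hC τ hτ)
          (norm_integral_le_pow_div_factorial hτ.1 fun σ hσ =>
            norm_picardTerm_le hC n σ ⟨hσ.1.le, hσ.2.trans hτ.2⟩)
          (norm_nonneg _) ((norm_nonneg _).trans (hC τ hτ))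

theorem norm_picardTerm_le_uniform (hC : ∀ t ∈ Icc a b, ‖At t‖ ≤ C) (n : ℕ)
    (hτ : τ ∈ Icc a b) : ‖picardTerm a At n τ‖ ≤ C * ((C * (b - a)) ^ n / n !) := by
  have hC0 : 0 ≤ C := (norm_nonneg _).trans (hC τ hτ)
  refine (norm_picardTerm_le hC n τ hτ).trans ?_
  have : 0 ≤ τ - a := sub_nonneg.2 hτ.1
  gcongr
  exact hτ.2

theorem norm_integral_picardTerm_le (hC : ∀ t ∈ Icc a b, ‖At t‖ ≤ C) (n : ℕ)
    (ht : t ∈ Icc a b) :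
    ‖∫ σ in a..t, picardTerm a At n σ‖ ≤ (C * (b - a)) ^ (n + 1) / (n + 1)! := by
  have hC0 : 0 ≤ C := (norm_nonneg _).trans (hC t ht)
  refine (norm_integral_le_pow_div_factorial ht.1 fun σ hσ =>
    norm_picardTerm_le hC n σ ⟨hσ.1.le, hσ.2.trans ht.2⟩).trans ?_
  have : 0 ≤ t - a := sub_nonneg.2 ht.1
  gcongr
  exact ht.2

noncomputable def dysonSeries (a : ℝ) (At : ℝ → E) (t : ℝ) : E :=
  1 + ∑' n, ∫ σ in a..t, picardTerm a At n σ

theorem dysonSeries_self : dysonSeries a At a = 1 := by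
  simp [dysonSeries]

theorem hasSum_picardTerm (hsum : Summable fun n => ∫ σ in a..t, picardTerm a At n σ) :
    HasSum (fun n => picardTerm a At n t) (At t * dysonSeries a At t) := by
  have h := (hasSum_nat_add_iff (f := fun n => picardTerm a At n t) 1).mp
    (hsum.hasSum.mul_left (At t))
  rwa [Finset.sum_range_one, add_comm, picardTerm, ← mul_one_add] at h

variable [CompleteSpace E]

theorem summable_integral_picardTerm (hcont : ContinuousOn At (Icc a b)) (ht : t ∈ Icc a b) :
    Summable fun n => ∫ σ in a..t, picardTerm a At n σ := by
  obtain ⟨C, hC⟩ := isCompact_Icc.exists_bound_of_continuousOn hcont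
  exact .of_norm_bounded (summable_pow_succ_div_factorial _)
    fun n => norm_integral_picardTerm_le hC n ht

theorem continuousOn_dysonSeries (hab : a ≤ b) (hcont : ContinuousOn At (Icc a b)) :
    ContinuousOn (dysonSeries a At) (Icc a b) := by
  obtain ⟨C, hC⟩ := isCompact_Icc.exists_bound_of_continuousOn hcont
  exact continuousOn_const.add <| continuousOn_tsum
    (fun n => continuousOn_primitive_of_continuousOn hab (continuousOn_picardTerm hab hcont n))
    (summable_pow_succ_div_factorial _) fun n _ ht => norm_integral_picardTerm_le hC n ht

theorem dysonSeries_eq_one_add_integral (hcont : ContinuousOn At (Icc a b)) (ht : t ∈ Icc a b) :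
    dysonSeries a At t = 1 + ∫ σ in a..t, At σ * dysonSeries a At σ := by
  obtain ⟨C, hC⟩ := isCompact_Icc.exists_bound_of_continuousOn hcont
  have hab : a ≤ b := ht.1.trans ht.2
  have hsub : uIoc a t ⊆ Icc a b := by
    rw [uIoc_of_le ht.1]
    exact Ioc_subset_Icc_self.trans (Icc_subset_Icc_right ht.2)
  rw [dysonSeries, (intervalIntegral.hasSum_integral_of_dominated_convergence
    (fun n _ => C * ((C * (b - a)) ^ n / n !))
    (fun n => ((continuousOn_picardTerm hab hcont n).mono hsub).aestronglyMeasurable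
      measurableSet_uIoc)
    (fun n => ae_of_all _ fun _ hσ => norm_picardTerm_le_uniform hC n (hsub hσ))
    (ae_of_all _ fun _ _ => (Real.summable_pow_div_factorial _).mul_left C)
    intervalIntegrable_const
    (ae_of_all _ fun σ hσ => hasSum_picardTerm
      (summable_integral_picardTerm hcont (hsub hσ)))).tsum_eq]

theorem hasDerivWithinAt_dysonSeries (hcont : ContinuousOn At (Icc a b)) (ht : t ∈ Icc a b) :
    HasDerivWithinAt (dysonSeries a At) (At t * dysonSeries a At t) (Icc a b) t :=
  ((hasDerivWithinAt_primitive_of_continuousOn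
      (hcont.mul (continuousOn_dysonSeries (ht.1.trans ht.2) hcont)) ht).const_add 1).congr_of_mem
    (fun _ hs => dysonSeries_eq_one_add_integral hcont hs) ht

end LinearODE

theorem heaviside_sub_smul {M : Type*} [AddCommGroup M] [Module ℝ M] (t σ : ℝ) (g : ℝ → M) :
    Heaviside (t - σ) • g σ = {x | x ≤ t}.indicator g σ := by
  by_cases h : σ ≤ t <;> simp [Heaviside, indicator, h]

section Kernels

variable {N : ℕ} {a b t : ℝ}

theorem integral_heaviside_smul_mul (ht : t ∈ Icc a b) (M : MatN N) (X : ℝ → MatN N) :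
    ∫ σ in a..b, (Heaviside (t - σ) • M) * X σ = ∫ σ in a..t, M * X σ := by
  rw [← intervalIntegral.integral_indicator ht]
  simp_rw [← heaviside_sub_smul]
  exact intervalIntegral.integral_congr fun σ _ => ContinuousLinearMap.smul_comp _ M (X σ)

theorem mStarPow_apply_eq_picardTerm (hab : a ≤ b) {At : ℝ → MatN N}
    (hcont : ContinuousOn At (Icc a b)) {A : ℝ → ℝ → MatN N}
    (hA : ∀ t s, A t s = Heaviside (t - s) • At t) :
    ∀ n, ∀ τ ∈ Icc a b, mStarPow a b A n τ a = picardTerm a At n τ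
  | 0, τ, hτ => by
    rw [mStarPow, hA, heaviside_sub_smul (g := fun _ => At τ),
      indicator_of_mem (show a ∈ {x | x ≤ τ} from hτ.1)]
    rfl
  | n + 1, τ, hτ =>
    calc mStarPow a b A (n + 1) τ a
        = ∫ σ in a..b, (Heaviside (τ - σ) • At τ) * picardTerm a At n σ :=
          intervalIntegral.integral_congr fun σ hσ => by
            rw [hA, mStarPow_apply_eq_picardTerm hab hcont hA n σ (uIcc_of_le hab ▸ hσ)]
      _ = ∫ σ in a..τ, At τ * picardTerm a At n σ := integral_heaviside_smul_mul hτ _ _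
      _ = picardTerm a At (n + 1) τ :=
          (ContinuousLinearMap.compL ℂ _ _ _ (At τ)).intervalIntegral_comp_comm
            (((continuousOn_picardTerm hab hcont n).mono
              (Icc_subset_Icc_right hτ.2)).intervalIntegrable_of_Icc hτ.1)

theorem mStarProd_thetaI_mStarPow (hab : a ≤ b) {At : ℝ → MatN N}
    (hcont : ContinuousOn At (Icc a b)) {A : ℝ → ℝ → MatN N}
    (hA : ∀ t s, A t s = Heaviside (t - s) • At t) (n : ℕ) (ht : t ∈ Icc a b) :
    mStarProd a b (thetaI N) (mStarPow a b A n) t a = ∫ σ in a..t, picardTerm a At n σ :=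
  calc mStarProd a b (thetaI N) (mStarPow a b A n) t a
      = ∫ σ in a..b, (Heaviside (t - σ) • 1) * picardTerm a At n σ :=
        intervalIntegral.integral_congr fun σ hσ => by
          rw [mStarPow_apply_eq_picardTerm hab hcont hA n σ (uIcc_of_le hab ▸ hσ)]
          rfl
    _ = ∫ σ in a..t, picardTerm a At n σ := by
        rw [integral_heaviside_smul_mul ht]
        simp_rw [one_mul]

end Kernels

/-- For continuous `Ã`, the Peano–Baker/Dyson series
`U(t) = I + ∑_{n≥1} (Θ ★ A^{★n})(t,a)`, with `A(t,s) = Ã(t)Θ(t-s)`, converges and is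
the unique solution of `U' = Ã U`, `U(a) = I` (here `mStarPow a b A n = A^{★(n+1)}`). -/
theorem dyson_series_solves_ode {N : ℕ} (a b : ℝ) (hab : a ≤ b)
    (At : ℝ → MatN N) (hcont : ContinuousOn At (Icc a b))
    (A : ℝ → ℝ → MatN N) (hA : ∀ t s, A t s = Heaviside (t - s) • At t)
    (U : ℝ → MatN N)
    (hU : ∀ t, U t = 1 + ∑' n : ℕ, mStarProd a b (thetaI N) (mStarPow a b A n) t a) :
    (∀ t ∈ Icc a b,
        Summable fun n : ℕ => mStarProd a b (thetaI N) (mStarPow a b A n) t a) ∧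
    U a = 1 ∧
    (∀ t ∈ Icc a b, HasDerivWithinAt U (At t * U t) (Icc a b) t) ∧
    (∀ V : ℝ → MatN N, V a = 1 →
      (∀ t ∈ Icc a b, HasDerivWithinAt V (At t * V t) (Icc a b) t) →
      ∀ t ∈ Icc a b, V t = U t) := by
  have hterm := fun n t (ht : t ∈ Icc a b) => mStarProd_thetaI_mStarPow hab hcont hA n ht
  have hUD : EqOn U (dysonSeries a At) (Icc a b) := fun t ht => by
    rw [hU, dysonSeries, tsum_congr fun n => hterm n t ht]
  have hUa : U a = 1 := (hUD (left_mem_Icc.2 hab)).trans dysonSeries_self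
  have hderiv : ∀ t ∈ Icc a b, HasDerivWithinAt U (At t * U t) (Icc a b) t := fun t ht => by
    rw [hUD ht]
    exact (hasDerivWithinAt_dysonSeries hcont ht).congr_of_mem hUD ht
  refine ⟨fun t ht => ?_, hUa, hderiv, fun V hVa hV => ?_⟩
  · exact (summable_integral_picardTerm hcont ht).congr fun n => (hterm n t ht).symm
  · exact eqOn_of_hasDerivWithinAt_mul_left hcont hV hderiv (hVa.trans hUa.symm)
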